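/- arXiv:1309.2375 — 3 statements merged into one kernel-verified Lean document; each statement's English description precedes it below -/
import Mathlib

section
/- Let φ : ℝ^k → ℝ be a proper convex L-Lipschitz function w.r.t. a norm ‖·‖_P with dual norm ‖·‖_D satisfying ‖·‖_2 ≤ ‖·‖_D. Define φ̃*(α) = φ*(α) + (γ/2)‖α‖_2^2 and let φ̃ be the conjugate of φ̃*. Then for every a, 0 ≤ φ(a) − φ̃(a) ≤ γL²/2. -/
/-!
A finite convex function on `ℝ^k` is continuous, so it has a supporting hyperplane, i.e. a
subgradient `b`, at every point `a`. There the Fenchel–Young inequality is an equality,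
`φ* b = ⟪a, b⟫ - φ a`, and the Lipschitz bound forces `‖b‖_D ≤ L`, hence `‖b‖₂ ≤ L`.
Testing the supremum defining `φ̃ a` at `b` loses only `γ ‖b‖₂² / 2 ≤ γ L² / 2`, while
`φ̃ ≤ φ` because the regularization only increases `φ*` and `φ** ≤ φ`.
-/

open Set

section Subgradient

variable {E : Type*} [AddCommGroup E] [TopologicalSpace E] [IsTopologicalAddGroup E]
  [Module ℝ E] [ContinuousSMul ℝ E]

/-- Separate `(a, f a)` from the open strict epigraph; the separating functional has a negative
`ℝ`-component, and rescaling it to `-1` leaves a supporting hyperplane of the graph at `a`. -/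
theorem ConvexOn.exists_strongDual_sub_le {f : E → ℝ} (hf : ConvexOn ℝ univ f)
    (hcont : Continuous f) (a : E) : ∃ ℓ : StrongDual ℝ E, ∀ x, ℓ x - f x ≤ ℓ a - f a := by
  have hconv : Convex ℝ {p : E × ℝ | f p.1 < p.2} := by
    simpa using hf.convex_strict_epigraph
  have hopen : IsOpen {p : E × ℝ | f p.1 < p.2} :=
    isOpen_lt (hcont.comp continuous_fst) continuous_snd
  obtain ⟨g, hg⟩ := geometric_hahn_banach_open_point hconv hopen (x := (a, f a)) (by simp)
  set c := g (0, 1)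
  have hsplit : ∀ x t, g (x, t) = g (x, 0) + t * c := by
    intro x t
    rw [← smul_eq_mul, ← map_smul, ← map_add]
    simp
  have hstrict : ∀ x, ∀ ε > 0, g (x, 0) + (f x + ε) * c < g (a, 0) + f a * c := by
    intro x ε hε
    simpa only [← hsplit] using hg (x, f x + ε) (by simpa using hε)
  have hc : c < 0 := by nlinarith [hstrict a 1 one_pos]
  refine ⟨(-c)⁻¹ • g.comp (ContinuousLinearMap.inl ℝ E ℝ), fun x => ?_⟩
  have hsupport : g (x, 0) + f x * c ≤ g (a, 0) + f a * c := by
    refine le_of_forall_pos_lt_add fun δ hδ => ?_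
    have := hstrict x (δ / -c) (div_pos hδ (neg_pos.2 hc))
    rw [add_mul, div_mul_eq_mul_div, div_neg, mul_div_cancel_right₀ _ hc.ne] at this
    linarith
  have hrescale : ∀ y, (-c)⁻¹ * g (y, 0) - f y = (-c)⁻¹ * (g (y, 0) + f y * c) := by
    intro y
    field_simp [hc.ne]
    ring
  simp only [FunLike.coe_smul, ContinuousLinearMap.coe_comp, Pi.smul_apply, Function.comp_apply,
    ContinuousLinearMap.inl_apply, smul_eq_mul, hrescale]
  exact mul_le_mul_of_nonneg_left hsupport (inv_nonneg.2 (neg_nonneg.2 hc.le))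

end Subgradient

section Coordinates

variable {ι : Type*} [Fintype ι]

theorem StrongDual.exists_eq_dotProduct (ℓ : StrongDual ℝ (ι → ℝ)) :
    ∃ b : ι → ℝ, ∀ x, ℓ x = x ⬝ᵥ b := by
  classical
  refine ⟨(dotProductEquiv ℝ ι).symm ℓ.toLinearMap, fun x => ?_⟩
  rw [dotProduct_comm]
  exact (LinearMap.congr_fun ((dotProductEquiv ℝ ι).apply_symm_apply ℓ.toLinearMap) x).symm

theorem ConvexOn.exists_dotProduct_sub_le {φ : (ι → ℝ) → ℝ} (hφ : ConvexOn ℝ univ φ)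
    (a : ι → ℝ) : ∃ b, ∀ x, x ⬝ᵥ b - φ x ≤ a ⬝ᵥ b - φ a := by
  have hcont : Continuous φ := continuousOn_univ.1 (hφ.continuousOn isOpen_univ)
  obtain ⟨ℓ, hℓ⟩ := hφ.exists_strongDual_sub_le hcont a
  obtain ⟨b, hb⟩ := ℓ.exists_eq_dotProduct
  exact ⟨b, fun x => by simpa only [hb] using hℓ x⟩

theorem dotProduct_le_mul_of_lipschitz {φ P : (ι → ℝ) → ℝ} {L : ℝ} {a b : ι → ℝ}
    (hLip : ∀ x y, |φ x - φ y| ≤ L * P (x - y)) (hb : ∀ x, x ⬝ᵥ b - φ x ≤ a ⬝ᵥ b - φ a)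
    (x : ι → ℝ) : b ⬝ᵥ x ≤ L * P x := by
  have hmax := hb (a + x)
  have hLip_x := hLip (a + x) a
  rw [add_sub_cancel_left] at hLip_x
  rw [add_dotProduct, dotProduct_comm x] at hmax
  linarith [le_abs_self (φ (a + x) - φ a)]

theorem sum_sq_le_sq_of_dotProduct_le {P : (ι → ℝ) → ℝ} {L : ℝ} {b : ι → ℝ} (hL : 0 ≤ L)
    (h2D : √(∑ i, b i ^ 2) ≤ sSup {r : ℝ | ∃ x, P x = 1 ∧ r = ∑ i, b i * x i})
    (hb : ∀ x, P x = 1 → b ⬝ᵥ x ≤ L) : ∑ i, b i ^ 2 ≤ L ^ 2 := by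
  have hdual : sSup {r : ℝ | ∃ x, P x = 1 ∧ r = ∑ i, b i * x i} ≤ L :=
    Real.sSup_le (by rintro r ⟨x, hx, rfl⟩; exact hb x hx) hL
  exact (Real.sqrt_le_left hL).1 (h2D.trans hdual)

end Coordinates

theorem EReal.coe_sub_add_le {t c r : ℝ} {s : EReal} (hs : ((t - c : ℝ) : EReal) ≤ s)
    (hr : 0 ≤ r) : (t : EReal) - (s + r) ≤ c :=
  calc (t : EReal) - (s + r) ≤ t - ((t - c : ℝ) : EReal) :=
        EReal.sub_le_sub le_rfl (le_add_of_le_of_nonneg hs (EReal.coe_nonneg.2 hr))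
    _ = c := by rw [← EReal.coe_sub, sub_sub_cancel]

theorem smoothing_by_conjugate_regularization_approximation_general
    (k : ℕ) (L γ : ℝ) (hL : 0 ≤ L) (hγ : 0 < γ)
    (φ : (Fin k → ℝ) → ℝ) (P : (Fin k → ℝ) → ℝ)
    (hconv : ConvexOn ℝ Set.univ φ)
    (hLip : ∀ a b, |φ a - φ b| ≤ L * P (a - b))
    (h2D : ∀ b : Fin k → ℝ,
      Real.sqrt (∑ i, (b i) ^ 2) ≤ sSup {r : ℝ | ∃ x, P x = 1 ∧ r = ∑ i, b i * x i})
    (φstar : (Fin k → ℝ) → EReal)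
    (hφstar : ∀ b, φstar b = ⨆ a : Fin k → ℝ, (((∑ i, a i * b i) - φ a : ℝ) : EReal))
    (φtilde : (Fin k → ℝ) → EReal)
    (hφtilde : ∀ a, φtilde a = ⨆ b : Fin k → ℝ,
      (((∑ i, a i * b i : ℝ) : EReal) - (φstar b + ((γ / 2 * ∑ i, (b i) ^ 2 : ℝ) : EReal)))) :
    ∀ a, ((φ a - γ * L ^ 2 / 2 : ℝ) : EReal) ≤ φtilde a ∧ φtilde a ≤ ((φ a : ℝ) : EReal) := by
  intro a
  obtain ⟨b, hb⟩ := hconv.exists_dotProduct_sub_le a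
  have hφstar_b : φstar b = ((a ⬝ᵥ b - φ a : ℝ) : EReal) := by
    rw [hφstar]
    exact le_antisymm (iSup_le fun x => EReal.coe_le_coe_iff.2 (hb x)) (le_iSup_of_le a le_rfl)
  have hb_sq : ∑ i, b i ^ 2 ≤ L ^ 2 := sum_sq_le_sq_of_dotProduct_le hL (h2D b)
    fun x hx => by simpa only [hx, mul_one] using dotProduct_le_mul_of_lipschitz hLip hb x
  refine ⟨?_, ?_⟩
  · rw [hφtilde]
    refine le_iSup_of_le b ?_
    rw [hφstar_b, ← EReal.coe_add, ← EReal.coe_sub, dotProduct]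
    exact EReal.coe_le_coe_iff.2 (by nlinarith)
  · rw [hφtilde]
    exact iSup_le fun v => EReal.coe_sub_add_le (by rw [hφstar]; exact le_iSup_of_le a le_rfl)
      (by positivity)

theorem smoothing_by_conjugate_regularization_approximation
    (k : ℕ) (L γ : ℝ) (hL : 0 ≤ L) (hγ : 0 < γ)
    (φ : (Fin k → ℝ) → ℝ) (P : (Fin k → ℝ) → ℝ)
    (hPnonneg : ∀ x, 0 ≤ P x)
    (hPeq : ∀ x, P x = 0 ↔ x = 0)
    (hPhom : ∀ (c : ℝ) (x), P (c • x) = |c| * P x)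
    (hPtri : ∀ x y, P (x + y) ≤ P x + P y)
    (hconv : ConvexOn ℝ Set.univ φ)
    (hLip : ∀ a b, |φ a - φ b| ≤ L * P (a - b))
    (h2D : ∀ b : Fin k → ℝ,
      Real.sqrt (∑ i, (b i) ^ 2) ≤ sSup {r : ℝ | ∃ x, P x = 1 ∧ r = ∑ i, b i * x i})
    (φstar : (Fin k → ℝ) → EReal)
    (hφstar : ∀ b, φstar b = ⨆ a : Fin k → ℝ, (((∑ i, a i * b i) - φ a : ℝ) : EReal))
    (φtilde : (Fin k → ℝ) → EReal)
    (hφtilde : ∀ a, φtilde a = ⨆ b : Fin k → ℝ,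
      (((∑ i, a i * b i : ℝ) : EReal) - (φstar b + ((γ / 2 * ∑ i, (b i) ^ 2 : ℝ) : EReal)))) :
    ∀ a, ((φ a - γ * L ^ 2 / 2 : ℝ) : EReal) ≤ φtilde a ∧ φtilde a ≤ ((φ a : ℝ) : EReal) :=
  smoothing_by_conjugate_regularization_approximation_general k L γ hL hγ φ P hconv hLip h2D φstar
    hφstar φtilde hφtilde
end

section
/- The conjugate of the soft-max-of-hinge loss φ_γ(a) = γ·log(1 + Σ_i e^{(c_i+a_i)/γ}) is φ_γ*(b) = −⟨c, b⟩ + γ·[(1−‖b‖₁)·log(1−‖b‖₁) + Σ_j b_j·log(b_j)] for b in the simplex-cap S = {b ∈ ℝ₊^k : ‖b‖₁ ≤ 1} (with 0·log 0 = 0), and φ_γ*(b) = +∞ for b ∉ S. -/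
/-!
After the substitution `a = γ • x - c` it suffices to treat `γ = 1`, `c = 0`. For `b` in the cap,
Gibbs' inequality between `(b, 1 - ∑ b)` and the soft-max vector `(exp x, 1) / (1 + ∑ exp x)`
bounds `⟨x, b⟩ - log (1 + ∑ exp x)` by the negative entropy, and `x = log b - log (1 - ∑ b)`
attains it, in the limit when a coordinate vanishes. Outside the cap the objective
grows linearly along `t • 1` if `∑ b > 1` and along `-t • e_j` if `b_j < 0`.
-/

open Real Finset Filter Topology

theorem EReal.iSup_coe_eq_of_le_of_tendsto {α β : Type*} {l : Filter β} [l.NeBot]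
    {f : α → ℝ} {u : β → α} {v : ℝ} (hle : ∀ a, f a ≤ v)
    (hlim : Tendsto (fun t => f (u t)) l (𝓝 v)) :
    ⨆ a, (f a : EReal) = v :=
  le_antisymm (iSup_le fun a => EReal.coe_le_coe (hle a)) <|
    le_of_tendsto' ((continuous_coe_real_ereal.tendsto v).comp hlim) fun t =>
      le_iSup (fun a => (f a : EReal)) (u t)

theorem EReal.iSup_coe_eq_top_of_tendsto_atTop {α β : Type*} {l : Filter β} [l.NeBot]
    {f : α → ℝ} {u : β → α} (hlim : Tendsto (fun t => f (u t)) l atTop) :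
    ⨆ a, (f a : EReal) = ⊤ :=
  eq_top_iff.2 <| le_of_tendsto' (EReal.tendsto_coe_atTop.comp hlim) fun t =>
    le_iSup (fun a => (f a : EReal)) (u t)

theorem mul_sub_log_sub_log_le {x y Q : ℝ} (hy : 0 ≤ y) (hQ : 0 < Q) :
    y * (x - log Q - log y) ≤ exp x / Q - y := by
  rcases hy.eq_or_lt with rfl | hy
  · simpa using by positivity
  have hlog : log (exp x / (y * Q)) = x - log Q - log y := by
    rw [log_div (exp_ne_zero x) (by positivity), log_exp, log_mul hy.ne' hQ.ne']
    ring
  calc y * (x - log Q - log y) ≤ y * (exp x / (y * Q) - 1) := by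
        rw [← hlog]; exact mul_le_mul_of_nonneg_left (log_le_sub_one_of_pos (by positivity)) hy.le
    _ = exp x / Q - y := by field_simp

section SoftMax

variable {ι : Type*} [Fintype ι]

noncomputable def logOneAddSumExp (x : ι → ℝ) : ℝ := log (1 + ∑ i, exp (x i))

/-- The negative entropy of the probability vector `(b, 1 - ∑ j, b j)`. -/
noncomputable def negEntropyCap (b : ι → ℝ) : ℝ :=
  (1 - ∑ j, b j) * log (1 - ∑ j, b j) + ∑ j, b j * log (b j)

/-- Gibbs' inequality for the probability vectors `(b, 1 - ∑ b)` and
`(exp x, 1) / (1 + ∑ exp x)`. -/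
theorem sum_mul_sub_logOneAddSumExp_le {b : ι → ℝ} (hb : ∀ j, 0 ≤ b j) (hs : ∑ j, b j ≤ 1)
    (x : ι → ℝ) :
    ∑ i, x i * b i - logOneAddSumExp x ≤ negEntropyCap b := by
  set Q := 1 + ∑ i, exp (x i)
  have hQ : 0 < Q := by positivity
  have hterms : ∑ i, b i * (x i - log Q - log (b i)) ≤ ∑ i, (exp (x i) / Q - b i) :=
    sum_le_sum fun i _ => mul_sub_log_sub_log_le (hb i) hQ
  have hrest := mul_sub_log_sub_log_le (x := 0) (sub_nonneg.2 hs) hQ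
  have hQQ : (∑ i, exp (x i)) / Q + 1 / Q = 1 := by field_simp; ring
  simp only [mul_sub, sum_sub_distrib, ← sum_div, ← sum_mul, exp_zero] at hterms hrest
  simp only [logOneAddSumExp, negEntropyCap, mul_comm (x _)]
  linarith

/-- In the interior of the cap the supremum is attained at `ε = 0`; the shift `ε > 0` keeps the
logarithms finite when some `b j` or `1 - ∑ j, b j` vanishes. -/
noncomputable def approxArgmax (b : ι → ℝ) (ε : ℝ) (i : ι) : ℝ :=
  log (b i + ε) - log (1 - ∑ j, b j + ε)

theorem sum_mul_sub_logOneAddSumExp_approxArgmax {b : ι → ℝ} (hb : ∀ j, 0 ≤ b j)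
    (hs : ∑ j, b j ≤ 1) {ε : ℝ} (hε : 0 < ε) :
    ∑ i, approxArgmax b ε i * b i - logOneAddSumExp (approxArgmax b ε) =
      ∑ i, b i * log (b i + ε) + (1 - ∑ j, b j) * log (1 - ∑ j, b j + ε) -
        log (1 + (Fintype.card ι + 1) * ε) := by
  have hbε : ∀ i, 0 < b i + ε := fun i => by linarith [hb i]
  have hsε : 0 < 1 - ∑ j, b j + ε := by linarith
  have hexp : ∀ i, exp (approxArgmax b ε i) = (b i + ε) / (1 - ∑ j, b j + ε) := fun i => by
    rw [approxArgmax, exp_sub, exp_log (hbε i), exp_log hsε]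
  have hsum : 1 + ∑ i, exp (approxArgmax b ε i) =
      (1 + (Fintype.card ι + 1) * ε) / (1 - ∑ j, b j + ε) := by
    simp only [hexp, ← sum_div, sum_add_distrib, sum_const, card_univ, nsmul_eq_mul]
    field_simp
    ring
  rw [logOneAddSumExp, hsum, log_div (by positivity) hsε.ne']
  simp only [approxArgmax, sub_mul, sum_sub_distrib, ← mul_sum, mul_comm (log (b _ + ε))]
  ring

theorem tendsto_mul_log_add_nhdsGT {y : ℝ} (hy : 0 ≤ y) :
    Tendsto (fun ε => y * log (y + ε)) (𝓝[>] 0) (𝓝 (y * log y)) := by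
  rcases hy.eq_or_lt with rfl | hy
  · simp
  have hcont : ContinuousAt (fun ε => y * log (y + ε)) 0 :=
    continuousAt_const.mul ((continuousAt_const.add continuousAt_id).log (by simpa using hy.ne'))
  simpa using hcont.tendsto.mono_left nhdsWithin_le_nhds

theorem tendsto_sum_mul_sub_logOneAddSumExp_approxArgmax {b : ι → ℝ} (hb : ∀ j, 0 ≤ b j)
    (hs : ∑ j, b j ≤ 1) :
    Tendsto (fun ε => ∑ i, approxArgmax b ε i * b i - logOneAddSumExp (approxArgmax b ε))
      (𝓝[>] 0) (𝓝 (negEntropyCap b)) := by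
  have hsum := tendsto_finsetSum univ fun i _ => tendsto_mul_log_add_nhdsGT (hb i)
  have hrest := tendsto_mul_log_add_nhdsGT (sub_nonneg.2 hs)
  have hnorm : Tendsto (fun ε => log (1 + (Fintype.card ι + 1) * ε)) (𝓝[>] 0) (𝓝 0) := by
    have hcont : ContinuousAt (fun ε : ℝ => log (1 + (Fintype.card ι + 1) * ε)) 0 :=
      (continuousAt_const.add (continuousAt_const.mul continuousAt_id)).log (by simp)
    simpa using hcont.tendsto.mono_left nhdsWithin_le_nhds
  refine Tendsto.congr' (eventually_nhdsWithin_of_forall fun ε hε =>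
    (sum_mul_sub_logOneAddSumExp_approxArgmax hb hs hε).symm) ?_
  convert (hsum.add hrest).sub hnorm using 2
  rw [negEntropyCap, sub_zero, add_comm]

theorem logOneAddSumExp_smul_le {d : ι → ℝ} {m t : ℝ} (hm : 0 ≤ m) (hd : ∀ i, d i ≤ m)
    (ht : 0 ≤ t) :
    logOneAddSumExp (t • d) ≤ t * m + log (1 + Fintype.card ι) := by
  have hle : 1 + ∑ i, exp ((t • d) i) ≤ exp (t * m) * (1 + Fintype.card ι) :=
    calc 1 + ∑ i, exp ((t • d) i) ≤ exp (t * m) + ∑ _i : ι, exp (t * m) :=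
          add_le_add (one_le_exp (mul_nonneg ht hm))
            (sum_le_sum fun i _ => exp_le_exp.2 (mul_le_mul_of_nonneg_left (hd i) ht))
      _ = exp (t * m) * (1 + Fintype.card ι) := by
          simp only [sum_const, card_univ, nsmul_eq_mul]
          ring
  calc logOneAddSumExp (t • d) ≤ log (exp (t * m) * (1 + Fintype.card ι)) :=
        log_le_log (by positivity) hle
    _ = t * m + log (1 + Fintype.card ι) := by
        rw [log_mul (exp_ne_zero _) (by positivity), log_exp]

theorem tendsto_sum_mul_sub_logOneAddSumExp_smul_atTop {b d : ι → ℝ} {m : ℝ} (hm : 0 ≤ m)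
    (hd : ∀ i, d i ≤ m) (hdb : m < ∑ i, d i * b i) :
    Tendsto (fun t : ℝ => ∑ i, (t • d) i * b i - logOneAddSumExp (t • d)) atTop atTop := by
  have hlin : Tendsto (fun t : ℝ => t * (∑ i, d i * b i - m) - log (1 + Fintype.card ι))
      atTop atTop :=
    tendsto_atTop_add_const_right _ _ (tendsto_id.atTop_mul_const (sub_pos.2 hdb))
  refine tendsto_atTop_mono' _ ?_ hlin
  filter_upwards [eventually_ge_atTop 0] with t ht
  have hinner : ∑ i, (t • d) i * b i = t * ∑ i, d i * b i := by
    simp only [Pi.smul_apply, smul_eq_mul, mul_sum, mul_assoc]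
  linarith [logOneAddSumExp_smul_le hm hd ht]

theorem exists_tendsto_sum_mul_sub_logOneAddSumExp_atTop {b : ι → ℝ}
    (h : ¬((∀ j, 0 ≤ b j) ∧ ∑ j, b j ≤ 1)) :
    ∃ d : ι → ℝ,
      Tendsto (fun t : ℝ => ∑ i, (t • d) i * b i - logOneAddSumExp (t • d)) atTop atTop := by
  classical
  by_cases hb : ∀ j, 0 ≤ b j
  · refine ⟨1, tendsto_sum_mul_sub_logOneAddSumExp_smul_atTop zero_le_one (fun _ => le_rfl) ?_⟩
    simpa using not_le.1 fun hs => h ⟨hb, hs⟩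
  · obtain ⟨j, hj⟩ := not_forall.1 hb
    refine ⟨-Pi.single j 1, tendsto_sum_mul_sub_logOneAddSumExp_smul_atTop le_rfl
      (fun i => ?_) ?_⟩
    · by_cases hij : i = j <;> simp [hij]
    · simpa [Pi.single_apply] using not_le.1 hj

end SoftMax

theorem conjugate_soft_max_of_hinge (k : ℕ) (γ : ℝ) (hγ : 0 < γ)
    (c : Fin k → ℝ) (b : Fin k → ℝ) :
    (⨆ a : Fin k → ℝ,
        (((∑ i, a i * b i) - γ * Real.log (1 + ∑ i, Real.exp ((c i + a i) / γ)) : ℝ) : EReal)) =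
      if (∀ j, 0 ≤ b j) ∧ (∑ j, b j) ≤ 1 then
        ((-(∑ j, c j * b j) +
            γ * ((1 - ∑ j, b j) * Real.log (1 - ∑ j, b j) +
              ∑ j, b j * Real.log (b j)) : ℝ) : EReal)
      else ⊤ := by
  have hsubst : ∀ x : Fin k → ℝ, (∑ i, (γ * x i - c i) * b i) -
      γ * log (1 + ∑ i, exp ((c i + (γ * x i - c i)) / γ)) =
        γ * (∑ i, x i * b i - logOneAddSumExp x) - ∑ j, c j * b j := fun x => by
    simp only [add_sub_cancel, mul_div_cancel_left₀ _ hγ.ne', sub_mul, sum_sub_distrib,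
      mul_assoc, ← mul_sum, logOneAddSumExp]
    ring
  split_ifs with hS
  · obtain ⟨hb, hs⟩ := hS
    refine EReal.iSup_coe_eq_of_le_of_tendsto (l := 𝓝[>] 0)
      (u := fun ε i => γ * approxArgmax b ε i - c i) (fun a => ?_) ?_
    · obtain ⟨x, rfl⟩ : ∃ x : Fin k → ℝ, a = fun i => γ * x i - c i :=
        ⟨fun i => (c i + a i) / γ, by ext i; field_simp; ring⟩
      rw [hsubst]
      have := mul_le_mul_of_nonneg_left (sum_mul_sub_logOneAddSumExp_le hb hs x) hγ.le
      rw [negEntropyCap] at this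
      linarith
    · simp only [hsubst]
      convert ((tendsto_sum_mul_sub_logOneAddSumExp_approxArgmax hb hs).const_mul γ).sub_const
        (∑ j, c j * b j) using 2
      rw [negEntropyCap]
      ring
  · obtain ⟨d, hd⟩ := exists_tendsto_sum_mul_sub_logOneAddSumExp_atTop hS
    refine EReal.iSup_coe_eq_top_of_tendsto_atTop (l := atTop)
      (u := fun (t : ℝ) i => γ * (t • d) i - c i) ?_
    simp only [hsubst]
    exact tendsto_atTop_add_const_right _ _ (hd.const_mul_atTop hγ)
end

section
/- For any γ > 0, the function φ̃_γ : ℝ^k → ℝ defined by φ̃_γ(a) = (γ/2)‖(a+c)/γ‖² − (γ/2)·min_{b ∈ S} ‖b − (a+c)/γ‖², where S = {b ∈ ℝ₊^k : ‖b‖₁ ≤ 1}, satisfies φ(a) − γ/2 ≤ φ̃_γ(a) ≤ φ(a), where φ(a) = max_j [c_j + a_j]_+ is the max-of-hinge loss. -/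
/-!
Write `w = a + c` and `S = {b ≥ 0, ∑ b ≤ 1}`. Expanding the square,
`γ/2 ‖w/γ‖² - γ/2 ‖b - w/γ‖² = ⟨b, w⟩ - γ/2 ‖b‖²`, so `φ̃_γ(a) = max_{b ∈ S} (⟨b, w⟩ - γ/2 ‖b‖²)`.
On `S` we have `⟨b, w⟩ ≤ max_j [w_j]_+`, with equality at `0` or at a unit vector, and
`0 ≤ ‖b‖² ≤ (∑ b)² ≤ 1`; the two bounds follow.
-/

open Finset

def subStdSimplex (ι : Type*) [Fintype ι] : Set (ι → ℝ) :=
  {b | (∀ j, 0 ≤ b j) ∧ ∑ j, b j ≤ 1}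

variable {ι : Type*} [Fintype ι]

theorem sum_sq_le_one_of_mem_subStdSimplex {b : ι → ℝ} (hb : b ∈ subStdSimplex ι) :
    ∑ i, b i ^ 2 ≤ 1 :=
  calc ∑ i, b i ^ 2 ≤ (∑ i, b i) ^ 2 := sum_sq_le_sq_sum_of_nonneg fun i _ => hb.1 i
    _ ≤ 1 := pow_le_one₀ (sum_nonneg fun i _ => hb.1 i) hb.2

theorem sum_mul_le_iSup_max_zero {b : ι → ℝ} (hb : b ∈ subStdSimplex ι) (v : ι → ℝ) :
    ∑ i, b i * v i ≤ ⨆ j, max 0 (v j) := by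
  set m := ⨆ j, max 0 (v j)
  have hv : ∀ j, v j ≤ m := fun j =>
    (le_max_right _ _).trans <|
      le_ciSup (f := fun j => max 0 (v j)) (Set.finite_range _).bddAbove j
  calc ∑ i, b i * v i ≤ ∑ i, b i * m :=
        sum_le_sum fun i _ => mul_le_mul_of_nonneg_left (hv i) (hb.1 i)
    _ = (∑ i, b i) * m := (sum_mul ..).symm
    _ ≤ m := mul_le_of_le_one_left (Real.iSup_nonneg fun j => le_max_left _ _) hb.2

theorem exists_mem_subStdSimplex_sum_mul_eq_iSup_max_zero (v : ι → ℝ) :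
    ∃ b ∈ subStdSimplex ι, ∑ i, b i * v i = ⨆ j, max 0 (v j) := by
  classical
  have h₀ : (0 : ι → ℝ) ∈ subStdSimplex ι := ⟨fun _ => le_rfl, by simp⟩
  cases isEmpty_or_nonempty ι
  · exact ⟨0, h₀, by simp⟩
  obtain ⟨j, hj⟩ := exists_eq_ciSup_of_finite (f := fun j => max 0 (v j))
  rw [← hj]
  rcases le_total (v j) 0 with hneg | hpos
  · exact ⟨0, h₀, by simp [hneg]⟩
  · refine ⟨Pi.single j 1, ⟨fun i => ?_, by simp⟩, by simp [Pi.single_apply, ite_mul, hpos]⟩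
    by_cases h : i = j <;> simp [h]

theorem half_mul_sum_sq_div_sub_half_mul_sum_sq_sub_div {γ : ℝ} (hγ : γ ≠ 0) (b w : ι → ℝ) :
    γ / 2 * ∑ i, (w i / γ) ^ 2 - γ / 2 * ∑ i, (b i - w i / γ) ^ 2 =
      ∑ i, b i * w i - γ / 2 * ∑ i, b i ^ 2 := by
  simp only [← mul_sub, ← sum_sub_distrib, mul_sum]
  refine sum_congr rfl fun i _ => ?_
  field_simp
  ring

noncomputable def smoothedMaxHinge (γ : ℝ) (w : ι → ℝ) : ℝ :=
  γ / 2 * ∑ i, (w i / γ) ^ 2 -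
    γ / 2 * sInf ((fun b => ∑ i, (b i - w i / γ) ^ 2) '' subStdSimplex ι)

theorem iSup_max_zero_sub_half_le_smoothedMaxHinge {γ : ℝ} (hγ : 0 < γ) (w : ι → ℝ) :
    (⨆ j, max 0 (w j)) - γ / 2 ≤ smoothedMaxHinge γ w := by
  obtain ⟨b, hb, hbw⟩ := exists_mem_subStdSimplex_sum_mul_eq_iSup_max_zero w
  have hbdd : BddBelow ((fun b => ∑ i, (b i - w i / γ) ^ 2) '' subStdSimplex ι) :=
    ⟨0, by rintro _ ⟨b, -, rfl⟩; positivity⟩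
  have hγ2 : 0 ≤ γ / 2 := by positivity
  have hinf := mul_le_mul_of_nonneg_left (csInf_le hbdd ⟨b, hb, rfl⟩) hγ2
  have hsq := mul_le_mul_of_nonneg_left (sum_sq_le_one_of_mem_subStdSimplex hb) hγ2
  have := half_mul_sum_sq_div_sub_half_mul_sum_sq_sub_div hγ.ne' b w
  unfold smoothedMaxHinge
  linarith

theorem smoothedMaxHinge_le_iSup_max_zero {γ : ℝ} (hγ : 0 < γ) (w : ι → ℝ) :
    smoothedMaxHinge γ w ≤ ⨆ j, max 0 (w j) := by
  have hγ2 : 0 < γ / 2 := by positivity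
  have hne : ((fun b => ∑ i, (b i - w i / γ) ^ 2) '' subStdSimplex ι).Nonempty :=
    Set.Nonempty.image _ ⟨0, fun _ => le_rfl, by simp⟩
  have hinf : γ / 2 * ∑ i, (w i / γ) ^ 2 - ⨆ j, max 0 (w j) ≤
      γ / 2 * sInf ((fun b => ∑ i, (b i - w i / γ) ^ 2) '' subStdSimplex ι) := by
    refine (div_le_iff₀' hγ2).1 (le_csInf hne ?_)
    rintro _ ⟨b, hb, rfl⟩
    rw [div_le_iff₀' hγ2]
    have := half_mul_sum_sq_div_sub_half_mul_sum_sq_sub_div hγ.ne' b w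
    have : 0 ≤ γ / 2 * ∑ i, b i ^ 2 := by positivity
    linarith [sum_mul_le_iSup_max_zero hb w]
  unfold smoothedMaxHinge
  linarith

theorem smoothed_max_of_hinge_approximation_general
    (k : ℕ) (γ : ℝ) (hγ : 0 < γ) (c : Fin k → ℝ)
    (φt : (Fin k → ℝ) → ℝ)
    (hφt : ∀ a, φt a = γ / 2 * (∑ i, ((a i + c i) / γ) ^ 2) -
      γ / 2 * sInf {r : ℝ | ∃ b : Fin k → ℝ, (∀ j, 0 ≤ b j) ∧ (∑ j, b j) ≤ 1 ∧
        r = ∑ i, (b i - (a i + c i) / γ) ^ 2}) :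
    ∀ a, (⨆ j, max 0 (c j + a j)) - γ / 2 ≤ φt a ∧
      φt a ≤ ⨆ j, max 0 (c j + a j) := by
  intro a
  have hφa : φt a = smoothedMaxHinge γ (fun j => c j + a j) := by
    simp only [hφt a, smoothedMaxHinge, add_comm (a _) (c _ : ℝ)]
    congr 3
    ext r
    simp [subStdSimplex, eq_comm, and_assoc]
  rw [hφa]
  exact ⟨iSup_max_zero_sub_half_le_smoothedMaxHinge hγ _,
    smoothedMaxHinge_le_iSup_max_zero hγ _⟩

theorem smoothed_max_of_hinge_approximation
    (k : ℕ) (hk : 0 < k) (γ : ℝ) (hγ : 0 < γ) (c : Fin k → ℝ)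
    (φt : (Fin k → ℝ) → ℝ)
    (hφt : ∀ a, φt a = γ / 2 * (∑ i, ((a i + c i) / γ) ^ 2) -
      γ / 2 * sInf {r : ℝ | ∃ b : Fin k → ℝ, (∀ j, 0 ≤ b j) ∧ (∑ j, b j) ≤ 1 ∧
        r = ∑ i, (b i - (a i + c i) / γ) ^ 2}) :
    ∀ a, (⨆ j, max 0 (c j + a j)) - γ / 2 ≤ φt a ∧
      φt a ≤ ⨆ j, max 0 (c j + a j) :=
  smoothed_max_of_hinge_approximation_general k γ hγ c φt hφt
end
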